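/- arXiv:1611.03790 — 3 statements merged into one kernel-verified Lean document; each statement's English description precedes it below -/
import Mathlib

section
/- For all reals c ≥ 2, a > 0 and μ with 1 ≤ μ ≤ 2, there exists a constant a′ > 0 (depending only on c, a, μ) such that the following holds: for every CSS code C with K ≥ 1, w_X, w_Z, q_X, q_Z ≤ c, n_X ≤ c·N, n_Z ≤ c·N, and d_X·d_Z ≥ a·N^μ, there exists a CSS code C̃ (on some number Ñ of qubits) with K̃ = K, with w̃_X, w̃_Z, q̃_X, q̃_Z all at most c+2, and with min(d̃_X, d̃_Z) ≥ a′·Ñ^{1/(3−μ)}. -/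
open Matrix

/-- The weight of a vector over `F₂`: the number of nonzero entries. -/
def wt {α : Type*} [Fintype α] (v : α → ZMod 2) : ℕ :=
  (Finset.univ.filter fun j => v j ≠ 0).card

/-- A binary CSS code: matrices `HX ∈ F₂^{nX×N}` and `HZ ∈ F₂^{nZ×N}` with
`HX · HZᵀ = 0`. -/
structure CSSCode where
  N : ℕ
  nX : ℕ
  nZ : ℕ
  HX : Matrix (Fin nX) (Fin N) (ZMod 2)
  HZ : Matrix (Fin nZ) (Fin N) (ZMod 2)
  orth : HX * HZ.transpose = 0

namespace CSSCode

/-- Maximum weight of a row of `HX`. -/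
def wX (C : CSSCode) : ℕ := Finset.univ.sup fun i => wt (C.HX i)

/-- Maximum weight of a row of `HZ`. -/
def wZ (C : CSSCode) : ℕ := Finset.univ.sup fun i => wt (C.HZ i)

/-- Maximum weight of a column of `HX`. -/
def qX (C : CSSCode) : ℕ := Finset.univ.sup fun j => wt fun i => C.HX i j

/-- Maximum weight of a column of `HZ`. -/
def qZ (C : CSSCode) : ℕ := Finset.univ.sup fun j => wt fun i => C.HZ i j

/-- Number of logical qubits, `K = N − rank(H_X) − rank(H_Z)`. -/
noncomputable def K (C : CSSCode) : ℕ := C.N - C.HX.rank - C.HZ.rank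

/-- X-distance: the minimum weight of a vector in `ker(HZ)` not lying in the row space of
`HX`. -/
noncomputable def dX (C : CSSCode) : ℕ :=
  sInf {k | ∃ v : Fin C.N → ZMod 2, C.HZ.mulVec v = 0 ∧
    v ∉ Submodule.span (ZMod 2) (Set.range C.HX) ∧ wt v = k}

/-- Z-distance: the minimum weight of a vector in `ker(HX)` not lying in the row space of
`HZ`. -/
noncomputable def dZ (C : CSSCode) : ℕ :=
  sInf {k | ∃ v : Fin C.N → ZMod 2, C.HX.mulVec v = 0 ∧
    v ∉ Submodule.span (ZMod 2) (Set.range C.HZ) ∧ wt v = k}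

end CSSCode

/-! Distance balancing (Hastings; Evra–Kaufman–Zémor). View the code as the complex
`F₂^κZ → F₂^ι → F₂^κX` given by `H_Zᵀ` and `H_X`, and take its product with the chain complex of
a path with `t` edges. The path is contractible, and an explicit contracting homotopy (prefix
sums along the path) shows that the product code has the same number `K` of logical qubits.
Summing an `X`-logical of the product over the `t + 1` layers gives an `X`-logical of the original
code of no larger weight, while each of the `t + 1` layers of a `Z`-logical of the product is a
`Z`-logical of the original code; so `d̃_X ≥ d_X` and `d̃_Z ≥ (t + 1) d_Z`. The path has degree at
most two, so weights grow by at most two.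

After exchanging `X` and `Z` if necessary, `d_Z ≤ d_X`; for `t = ⌊d_X / d_Z⌋` both distances of the
product are at least `d_X`, while `Ñ ≤ 2 (1 + c) N d_X / d_Z`. Finally `a N^μ ≤ d_X d_Z` and
`d_X ≤ N` give `N d_X / d_Z ≤ d_X^(3 - μ) / a`, that is `Ñ ≤ (2 (1 + c) / a) d_X^(3 - μ)`. -/

open scoped Kronecker

section Weight

variable {ι α β : Type*} [Fintype α] [Fintype β]

lemma wt_eq_zero_iff {v : α → ZMod 2} : wt v = 0 ↔ v = 0 := by
  simp [wt, Finset.filter_eq_empty_iff, funext_iff]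

lemma wt_le_card (v : α → ZMod 2) : wt v ≤ Fintype.card α :=
  Finset.card_filter_le _ _

lemma wt_comp_le (v : β → ZMod 2) {f : α → β} (hf : Function.Injective f) :
    wt (v ∘ f) ≤ wt v := by
  classical
  refine Finset.card_le_card_of_injOn f (fun a ha => ?_) hf.injOn
  simpa using ha

lemma wt_comp_equiv (v : β → ZMod 2) (e : α ≃ β) : wt (v ∘ e) = wt v := by
  simp only [wt]
  exact Finset.card_equiv e (by simp)

lemma wt_sumElim (f : α → ZMod 2) (g : β → ZMod 2) : wt (Sum.elim f g) = wt f + wt g := by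
  simp only [wt, Finset.card_filter, Fintype.sum_sum_type, Sum.elim_inl, Sum.elim_inr]
  rfl

lemma wt_prod (v : α × β → ZMod 2) : wt v = ∑ a, wt fun b => v (a, b) := by
  simp only [wt, Finset.card_filter, Fintype.sum_prod_type]

lemma wt_mul_prod (f : α → ZMod 2) (g : β → ZMod 2) :
    wt (fun p : α × β => f p.1 * g p.2) = wt f * wt g := by
  classical
  simp only [wt, ← Finset.card_product, ne_eq, mul_eq_zero, not_or]
  congr 1
  ext ⟨a, b⟩
  simp

lemma wt_add_le (f g : α → ZMod 2) : wt (f + g) ≤ wt f + wt g := by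
  classical
  refine (Finset.card_le_card fun a => ?_).trans (Finset.card_union_le _ _)
  simp only [Finset.mem_filter, Finset.mem_univ, true_and, Finset.mem_union, Pi.add_apply]
  contrapose!
  rintro ⟨hf, hg⟩
  simp [hf, hg]

lemma wt_sum_le (s : Finset ι) (f : ι → α → ZMod 2) : wt (∑ i ∈ s, f i) ≤ ∑ i ∈ s, wt (f i) :=
  Finset.le_sum_of_subadditive wt (by simp [wt]) wt_add_le s f

lemma wt_vec (W : Matrix α β (ZMod 2)) : wt W.vec = ∑ j, wt (W.col j) :=
  wt_prod W.vec

lemma wt_mulVec_one_le (W : Matrix α β (ZMod 2)) : wt (W *ᵥ 1) ≤ wt W.vec := by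
  rw [mulVec_one, wt_vec]
  exact wt_sum_le _ _

end Weight

namespace Matrix

section MaxRowWt

variable {l m n o : Type*} [Fintype m] [Fintype n] [Fintype o] [Fintype l]

def maxRowWt (M : Matrix m n (ZMod 2)) : ℕ :=
  Finset.univ.sup fun i => wt (M i)

lemma maxRowWt_le_iff {M : Matrix m n (ZMod 2)} {k : ℕ} :
    M.maxRowWt ≤ k ↔ ∀ i, wt (M i) ≤ k := by
  simp [maxRowWt]

lemma wt_le_maxRowWt (M : Matrix m n (ZMod 2)) (i : m) : wt (M i) ≤ M.maxRowWt :=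
  maxRowWt_le_iff.1 le_rfl i

lemma maxRowWt_reindex (M : Matrix m n (ZMod 2)) (e₁ : m ≃ l) (e₂ : n ≃ o) :
    (reindex e₁ e₂ M).maxRowWt = M.maxRowWt := by
  refine le_antisymm (maxRowWt_le_iff.2 fun i => ?_) (maxRowWt_le_iff.2 fun i => ?_)
  · change wt (M (e₁.symm i) ∘ e₂.symm) ≤ _
    rw [wt_comp_equiv]
    exact M.wt_le_maxRowWt _
  · have : wt (M (e₁.symm (e₁ i)) ∘ e₂.symm) ≤ _ := (reindex e₁ e₂ M).wt_le_maxRowWt (e₁ i)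
    rwa [wt_comp_equiv, Equiv.symm_apply_apply] at this

lemma maxRowWt_submatrix_le (M : Matrix m n (ZMod 2)) (e : l → m) {f : o → n}
    (hf : Function.Injective f) : (M.submatrix e f).maxRowWt ≤ M.maxRowWt :=
  maxRowWt_le_iff.2 fun i => (wt_comp_le (M (e i)) hf).trans (M.wt_le_maxRowWt _)

lemma maxRowWt_one [DecidableEq n] : (1 : Matrix n n (ZMod 2)).maxRowWt ≤ 1 := by
  refine maxRowWt_le_iff.2 fun i => Finset.card_le_one.2 fun j hj k hk => ?_
  simp only [Finset.mem_filter, one_apply, ne_eq, ite_eq_right_iff, Classical.not_imp] at hj hk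
  exact hj.2.1.symm.trans hk.2.1

lemma maxRowWt_zero : (0 : Matrix m n (ZMod 2)).maxRowWt = 0 := by
  simp [maxRowWt, wt]

lemma maxRowWt_add_le (A B : Matrix m n (ZMod 2)) :
    (A + B).maxRowWt ≤ A.maxRowWt + B.maxRowWt :=
  maxRowWt_le_iff.2 fun i =>
    (wt_add_le (A i) (B i)).trans (add_le_add (A.wt_le_maxRowWt i) (B.wt_le_maxRowWt i))

lemma maxRowWt_kronecker_le (A : Matrix l m (ZMod 2)) (B : Matrix n o (ZMod 2)) :
    (A ⊗ₖ B).maxRowWt ≤ A.maxRowWt * B.maxRowWt := by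
  refine maxRowWt_le_iff.2 fun ⟨i, k⟩ => ?_
  rw [show (A ⊗ₖ B) (i, k) = fun p => A i p.1 * B k p.2 from rfl, wt_mul_prod]
  exact Nat.mul_le_mul (A.wt_le_maxRowWt i) (B.wt_le_maxRowWt k)

lemma maxRowWt_kronecker_one_le [DecidableEq o] (A : Matrix m n (ZMod 2)) :
    (A ⊗ₖ (1 : Matrix o o (ZMod 2))).maxRowWt ≤ A.maxRowWt :=
  (maxRowWt_kronecker_le A 1).trans (mul_le_of_le_one_right' maxRowWt_one)

lemma maxRowWt_one_kronecker_le [DecidableEq o] (A : Matrix m n (ZMod 2)) :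
    ((1 : Matrix o o (ZMod 2)) ⊗ₖ A).maxRowWt ≤ A.maxRowWt :=
  (maxRowWt_kronecker_le 1 A).trans (mul_le_of_le_one_left' maxRowWt_one)

lemma maxRowWt_fromBlocks_le {m' n' : Type*} [Fintype m'] [Fintype n'] (A : Matrix m n (ZMod 2))
    (B : Matrix m n' (ZMod 2)) (C : Matrix m' n (ZMod 2)) (D : Matrix m' n' (ZMod 2)) :
    (fromBlocks A B C D).maxRowWt ≤
      max (A.maxRowWt + B.maxRowWt) (C.maxRowWt + D.maxRowWt) := by
  refine maxRowWt_le_iff.2 fun i => ?_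
  rcases i with i | i
  · exact (wt_sumElim (A i) (B i)).trans_le
      (le_max_of_le_left (add_le_add (A.wt_le_maxRowWt i) (B.wt_le_maxRowWt i)))
  · exact (wt_sumElim (C i) (D i)).trans_le
      (le_max_of_le_right (add_le_add (C.wt_le_maxRowWt i) (D.wt_le_maxRowWt i)))

lemma maxRowWt_fromCols_le {n' : Type*} [Fintype n'] (A : Matrix m n (ZMod 2))
    (B : Matrix m n' (ZMod 2)) : (fromCols A B).maxRowWt ≤ A.maxRowWt + B.maxRowWt :=
  maxRowWt_le_iff.2 fun i => (wt_sumElim (A i) (B i)).trans_le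
    (add_le_add (A.wt_le_maxRowWt i) (B.wt_le_maxRowWt i))

lemma maxRowWt_fromRows_le {m' : Type*} [Fintype m'] (A : Matrix m n (ZMod 2))
    (B : Matrix m' n (ZMod 2)) : (fromRows A B).maxRowWt ≤ max A.maxRowWt B.maxRowWt := by
  refine maxRowWt_le_iff.2 fun i => ?_
  rcases i with i | i
  · exact le_max_of_le_left (A.wt_le_maxRowWt i)
  · exact le_max_of_le_right (B.wt_le_maxRowWt i)

end MaxRowWt

lemma mem_span_range_iff_exists_vecMul {R m n : Type*} [CommSemiring R] [Fintype m]
    (M : Matrix m n R) (v : n → R) :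
    v ∈ Submodule.span R (Set.range M) ↔ ∃ y, y ᵥ* M = v := by
  change v ∈ Submodule.span R (Set.range M.row) ↔ _
  rw [← range_vecMulLinear]
  rfl

lemma rank_add_finrank_ker {K m n : Type*} [Field K] [Fintype n] (M : Matrix m n K) :
    M.rank + Module.finrank K (LinearMap.ker M.mulVecLin) = Fintype.card n := by
  rw [rank, LinearMap.finrank_range_add_finrank_ker, Module.finrank_fintype_fun_eq_card]

lemma exists_eq_sumElim_vec {R m n m' n' : Type*} (v : (n × m) ⊕ (n' × m') → R) :
    ∃ (W : Matrix m n R) (B : Matrix m' n' R), v = Sum.elim W.vec B.vec :=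
  ⟨of fun i j => v (.inl (j, i)), of fun i j => v (.inr (j, i)), by ext (_ | _) <;> rfl⟩

lemma vec_vecMulVec_one {R m n : Type*} [Semiring R] (y : m → R) :
    (vecMulVec y (1 : n → R)).vec = LinearMap.funLeft R R Prod.snd y := by
  ext
  simp [vecMulVec_apply]

end Matrix

section Distance

variable {ι m n : Type*}

def logicalWeights [Fintype ι] (A : Matrix m ι (ZMod 2)) (B : Matrix n ι (ZMod 2)) : Set ℕ :=
  {k | ∃ v : ι → ZMod 2, A *ᵥ v = 0 ∧ v ∉ Submodule.span (ZMod 2) (Set.range B) ∧ wt v = k}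

/-- `C.dX = cssDistance C.HZ C.HX` and `C.dZ = cssDistance C.HX C.HZ` hold by `rfl`. -/
noncomputable def cssDistance [Fintype ι] (A : Matrix m ι (ZMod 2)) (B : Matrix n ι (ZMod 2)) :
    ℕ :=
  sInf (logicalWeights A B)

variable {A : Matrix m ι (ZMod 2)} {B : Matrix n ι (ZMod 2)}

lemma cssDistance_le_wt [Fintype ι] {v : ι → ZMod 2} (hA : A *ᵥ v = 0)
    (hB : v ∉ Submodule.span (ZMod 2) (Set.range B)) : cssDistance A B ≤ wt v :=
  Nat.sInf_le ⟨v, hA, hB, rfl⟩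

lemma mem_span_range_reindex_iff {ι' n' : Type*} [Fintype n] [Fintype n'] (eB : n ≃ n') (e : ι ≃ ι')
    (v : ι' → ZMod 2) :
    v ∈ Submodule.span (ZMod 2) (Set.range (reindex eB e B)) ↔
      v ∘ e ∈ Submodule.span (ZMod 2) (Set.range B) := by
  simp only [mem_span_range_iff_exists_vecMul, reindex_apply, submatrix_vecMul_equiv,
    Equiv.symm_symm, Equiv.comp_symm_eq]
  exact ⟨fun ⟨y, hy⟩ => ⟨_, hy⟩, fun ⟨y, hy⟩ => ⟨y ∘ eB.symm, by simpa [Function.comp_assoc]⟩⟩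

variable [Fintype ι] [Fintype n]

lemma exists_wt_eq_cssDistance (hrank : A.rank + B.rank < Fintype.card ι) :
    ∃ v, A *ᵥ v = 0 ∧ v ∉ Submodule.span (ZMod 2) (Set.range B) ∧ wt v = cssDistance A B := by
  suffices ¬ LinearMap.ker A.mulVecLin ≤ Submodule.span (ZMod 2) (Set.range B) by
    obtain ⟨v, hA, hB⟩ := Set.not_subset.1 this
    exact Nat.sInf_mem (s := logicalWeights A B) ⟨wt v, v, hA, hB, rfl⟩
  intro hle
  have hspan : Module.finrank (ZMod 2) (LinearMap.ker A.mulVecLin) ≤ B.rank := by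
    rw [B.rank_eq_finrank_span_row]
    exact Submodule.finrank_mono hle
  have := A.rank_add_finrank_ker
  omega

lemma le_cssDistance {k : ℕ} (hrank : A.rank + B.rank < Fintype.card ι)
    (h : ∀ v, A *ᵥ v = 0 → v ∉ Submodule.span (ZMod 2) (Set.range B) → k ≤ wt v) :
    k ≤ cssDistance A B := by
  obtain ⟨v, hA, hB, hv⟩ := exists_wt_eq_cssDistance hrank
  exact hv ▸ h v hA hB

lemma one_le_cssDistance (hrank : A.rank + B.rank < Fintype.card ι) : 1 ≤ cssDistance A B := by
  obtain ⟨v, -, hB, hv⟩ := exists_wt_eq_cssDistance hrank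
  rw [← hv, Nat.one_le_iff_ne_zero, Ne, wt_eq_zero_iff]
  rintro rfl
  exact hB (Submodule.zero_mem _)

lemma cssDistance_le_card (hrank : A.rank + B.rank < Fintype.card ι) :
    cssDistance A B ≤ Fintype.card ι := by
  obtain ⟨v, -, -, hv⟩ := exists_wt_eq_cssDistance hrank
  exact hv ▸ wt_le_card v

lemma mulVec_reindex_eq_zero_iff {ι' m' : Type*} [Fintype ι'] (eA : m ≃ m') (e : ι ≃ ι')
    (v : ι' → ZMod 2) : reindex eA e A *ᵥ v = 0 ↔ A *ᵥ (v ∘ e) = 0 := by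
  rw [reindex_apply, submatrix_mulVec_equiv, Equiv.symm_symm, Equiv.comp_symm_eq, Pi.zero_comp]

lemma cssDistance_reindex {ι' m' n' : Type*} [Fintype ι'] [Fintype n']
    (eA : m ≃ m') (eB : n ≃ n') (e : ι ≃ ι') :
    cssDistance (reindex eA e A) (reindex eB e B) = cssDistance A B := by
  unfold cssDistance
  congr 1
  ext k
  simp only [logicalWeights, mulVec_reindex_eq_zero_iff, mem_span_range_reindex_iff]
  constructor
  · rintro ⟨v, hA, hB, rfl⟩
    exact ⟨v ∘ e, hA, hB, wt_comp_equiv v e⟩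
  · rintro ⟨v, hA, hB, rfl⟩
    refine ⟨v ∘ e.symm, ?_, ?_, wt_comp_equiv v e.symm⟩ <;>
      simpa [Function.comp_assoc]

end Distance

namespace Matrix

variable (t : ℕ)

def pathIncidence : Matrix (Fin (t + 1)) (Fin t) (ZMod 2) :=
  (1 : Matrix (Fin (t + 1)) (Fin (t + 1)) (ZMod 2)).submatrix id Fin.castSucc +
    (1 : Matrix (Fin (t + 1)) (Fin (t + 1)) (ZMod 2)).submatrix id Fin.succ

/-- Prefix sums along the path, a contracting homotopy of the path
(`pathPrefix_mul_pathIncidence_transpose`). -/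
def pathPrefix : Matrix (Fin (t + 1)) (Fin t) (ZMod 2) :=
  of fun σ s => if σ ≤ s.castSucc then 1 else 0

variable {t}

lemma pathIncidence_apply (σ : Fin (t + 1)) (s : Fin t) :
    pathIncidence t σ s = (if σ = s.castSucc then 1 else 0) + (if σ = s.succ then 1 else 0) := by
  simp [pathIncidence, one_apply]

lemma pathIncidence_transpose_mulVec_one : (pathIncidence t)ᵀ *ᵥ 1 = 0 := by
  ext s
  simp [mulVec, dotProduct, pathIncidence_apply, Finset.sum_add_distrib, ZModModule.add_self]

lemma pathIncidence_transpose_mul_pathPrefix : (pathIncidence t)ᵀ * pathPrefix t = 1 := by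
  ext s s'
  simp only [mul_apply, transpose_apply, pathIncidence_apply, add_mul, ite_mul, one_mul, zero_mul,
    Finset.sum_add_distrib, Finset.sum_ite_eq', Finset.mem_univ, if_true, pathPrefix, of_apply,
    Fin.castSucc_le_castSucc_iff, Fin.succ_le_castSucc_iff, one_apply]
  rcases lt_trichotomy s s' with h | rfl | h
  · simp [h.le, h, h.ne, ZModModule.add_self]
  · simp
  · simp [not_le.2 h, not_lt.2 h.le, h.ne']

lemma pathPrefix_mul_pathIncidence_transpose :
    pathPrefix t * (pathIncidence t)ᵀ = 1 + vecMulVec 1 (Pi.single (Fin.last t) 1) := by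
  ext σ σ'
  have hcast : ∑ s : Fin t, (if σ ≤ s.castSucc then (1 : ZMod 2) else 0) *
      (if σ' = s.castSucc then 1 else 0) =
      (if σ ≤ σ' then 1 else 0) + if σ' = Fin.last t then 1 else 0 := by
    have := Fin.sum_univ_castSucc fun τ : Fin (t + 1) =>
      (if σ ≤ τ then (1 : ZMod 2) else 0) * (if σ' = τ then 1 else 0)
    simp only [mul_ite, mul_one, mul_zero, Finset.sum_ite_eq, Finset.mem_univ, if_true,
      Fin.le_last] at this ⊢
    rw [this, add_assoc, ZModModule.add_self, add_zero]
  have hsucc : ∑ s : Fin t, (if σ ≤ s.castSucc then (1 : ZMod 2) else 0) *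
      (if σ' = s.succ then 1 else 0) = if σ < σ' then 1 else 0 := by
    have := Fin.sum_univ_succ fun τ : Fin (t + 1) =>
      (if σ < τ then (1 : ZMod 2) else 0) * (if σ' = τ then 1 else 0)
    simp only [mul_ite, mul_one, mul_zero, Finset.sum_ite_eq, Finset.mem_univ, if_true,
      Fin.le_castSucc_iff] at this ⊢
    simp [this]
  simp only [mul_apply, transpose_apply, pathIncidence_apply, pathPrefix, of_apply, mul_add,
    Finset.sum_add_distrib, hcast, hsucc]
  rcases lt_trichotomy σ σ' with h | rfl | h
  · simp only [h.le, h, h.ne, if_true, if_false, one_apply, add_apply, vecMulVec_apply,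
      Pi.one_apply, one_mul, Pi.single_apply]
    rw [add_right_comm, ZModModule.add_self, zero_add]
  · simp [Pi.single_apply]
  · simp [not_le.2 h, not_lt.2 h.le, h.ne', Pi.single_apply]

lemma pathPrefix_transpose_mul_pathIncidence : (pathPrefix t)ᵀ * pathIncidence t = 1 := by
  rw [← transpose_transpose (pathIncidence t), ← transpose_mul,
    pathIncidence_transpose_mul_pathPrefix, transpose_one]

lemma mul_pathPrefix_mul_pathIncidence_transpose {m : Type*} (W : Matrix m (Fin (t + 1)) (ZMod 2)) :
    W * pathPrefix t * (pathIncidence t)ᵀ = W + vecMulVec (W *ᵥ 1) (Pi.single (Fin.last t) 1) := by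
  rw [Matrix.mul_assoc, pathPrefix_mul_pathIncidence_transpose, Matrix.mul_add, Matrix.mul_one,
    mul_vecMulVec]

lemma mul_pathIncidence_mul_pathPrefix_transpose {m : Type*} (W : Matrix m (Fin (t + 1)) (ZMod 2)) :
    W * pathIncidence t * (pathPrefix t)ᵀ = W + vecMulVec (W.col (Fin.last t)) 1 := by
  rw [Matrix.mul_assoc, ← transpose_transpose (pathIncidence t), ← transpose_mul,
    pathPrefix_mul_pathIncidence_transpose, transpose_add, transpose_one, transpose_vecMulVec,
    Matrix.mul_add, Matrix.mul_one, mul_vecMulVec, mulVec_single_one]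

lemma vecMulVec_one_mul_pathIncidence {m : Type*} (y : m → ZMod 2) :
    vecMulVec y (1 : Fin (t + 1) → ZMod 2) * pathIncidence t = 0 := by
  rw [vecMulVec_mul, ← mulVec_transpose, pathIncidence_transpose_mulVec_one]
  ext i j
  simp [vecMulVec_apply]

lemma maxRowWt_pathIncidence_le : (pathIncidence t).maxRowWt ≤ 2 :=
  (maxRowWt_add_le _ _).trans <| add_le_add
    ((maxRowWt_submatrix_le _ _ (Fin.castSucc_injective t)).trans maxRowWt_one)
    ((maxRowWt_submatrix_le _ _ (Fin.succ_injective t)).trans maxRowWt_one)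

lemma maxRowWt_pathIncidence_transpose_le : (pathIncidence t)ᵀ.maxRowWt ≤ 2 := by
  rw [pathIncidence, transpose_add, transpose_submatrix, transpose_submatrix, transpose_one]
  exact (maxRowWt_add_le _ _).trans <| add_le_add
    ((maxRowWt_submatrix_le _ _ Function.injective_id).trans maxRowWt_one)
    ((maxRowWt_submatrix_le _ _ Function.injective_id).trans maxRowWt_one)

end Matrix

namespace DistanceBalancing

open Module

variable {ι κX κZ : Type*} [Fintype ι] [Fintype κX] [Fintype κZ] [DecidableEq ι] [DecidableEq κZ]

section Construction

variable (HX : Matrix κX ι (ZMod 2)) (HZ : Matrix κZ ι (ZMod 2)) (t : ℕ)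

/-- Qubits are `(Fin (t + 1) × ι) ⊕ (Fin t × κZ)`: a copy of the code on every vertex of the path
and a copy of its `Z`-checks on every edge. `Matrix.vec` indexes a matrix by (column, row), so a
vector on the qubits is `Sum.elim W.vec B.vec` with the layers as the columns of `W` and `B`. -/
def checkX :
    Matrix ((Fin t × ι) ⊕ (Fin (t + 1) × κX)) ((Fin (t + 1) × ι) ⊕ (Fin t × κZ)) (ZMod 2) :=
  fromBlocks ((pathIncidence t)ᵀ ⊗ₖ 1) (1 ⊗ₖ HZᵀ) (1 ⊗ₖ HX) 0

def checkZ : Matrix (Fin (t + 1) × κZ) ((Fin (t + 1) × ι) ⊕ (Fin t × κZ)) (ZMod 2) :=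
  fromCols (1 ⊗ₖ HZ) (pathIncidence t ⊗ₖ 1)

end Construction

variable {HX : Matrix κX ι (ZMod 2)} {HZ : Matrix κZ ι (ZMod 2)} {t : ℕ}

omit [Fintype κX] in
lemma checkX_mul_checkZ_transpose (h : HX * HZᵀ = 0) : checkX HX HZ t * (checkZ HZ t)ᵀ = 0 := by
  simp only [checkX, checkZ, transpose_fromCols, fromBlocks_mul_fromRows, ← kroneckerMap_transpose,
    transpose_one, ← mul_kronecker_mul, Matrix.one_mul, Matrix.mul_one, h, kronecker_zero,
    Matrix.zero_mul, ZModModule.add_self, fromRows_zero]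

section Formulas

variable (W : Matrix ι (Fin (t + 1)) (ZMod 2)) (B : Matrix κZ (Fin t) (ZMod 2))

omit [DecidableEq ι] in
lemma checkZ_mulVec :
    checkZ HZ t *ᵥ Sum.elim W.vec B.vec = (HZ * W + B * (pathIncidence t)ᵀ).vec := by
  simp [checkZ, kronecker_mulVec_vec, vec_add]

omit [Fintype κX] [DecidableEq κZ] in
lemma checkX_mulVec : checkX HX HZ t *ᵥ Sum.elim W.vec B.vec =
    Sum.elim (W * pathIncidence t + HZᵀ * B).vec (HX * W).vec := by
  simp [checkX, fromBlocks_mulVec, kronecker_mulVec_vec, vec_add]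

omit [Fintype κZ] [DecidableEq κZ] in
lemma vecMul_checkX (Y : Matrix ι (Fin t) (ZMod 2)) (Z : Matrix κX (Fin (t + 1)) (ZMod 2)) :
    Sum.elim Y.vec Z.vec ᵥ* checkX HX HZ t =
      Sum.elim (Y * (pathIncidence t)ᵀ + HXᵀ * Z).vec (HZ * Y).vec := by
  simp [checkX, vecMul_fromBlocks, vec_vecMul_kronecker, vec_add]

omit [Fintype ι] [DecidableEq ι] in
lemma vecMul_checkZ (Y : Matrix κZ (Fin (t + 1)) (ZMod 2)) :
    Y.vec ᵥ* checkZ HZ t = Sum.elim (HZᵀ * Y).vec (Y * pathIncidence t).vec := by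
  simp [checkZ, vec_vecMul_kronecker]

omit [Fintype κZ] [DecidableEq κZ] in
lemma mem_span_checkX_iff :
    Sum.elim W.vec B.vec ∈ Submodule.span (ZMod 2) (Set.range (checkX HX HZ t)) ↔
      ∃ (Y : Matrix ι (Fin t) (ZMod 2)) (Z : Matrix κX (Fin (t + 1)) (ZMod 2)),
        Y * (pathIncidence t)ᵀ + HXᵀ * Z = W ∧ HZ * Y = B := by
  rw [mem_span_range_iff_exists_vecMul]
  constructor
  · rintro ⟨y, hy⟩
    obtain ⟨Y, Z, rfl⟩ := exists_eq_sumElim_vec y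
    rw [vecMul_checkX, Sum.elim_eq_iff, vec_inj, vec_inj] at hy
    exact ⟨Y, Z, hy⟩
  · rintro ⟨Y, Z, rfl, rfl⟩
    exact ⟨_, vecMul_checkX Y Z⟩

omit [Fintype ι] [DecidableEq ι] in
lemma mem_span_checkZ_iff :
    Sum.elim W.vec B.vec ∈ Submodule.span (ZMod 2) (Set.range (checkZ HZ t)) ↔
      ∃ Y : Matrix κZ (Fin (t + 1)) (ZMod 2), HZᵀ * Y = W ∧ Y * pathIncidence t = B := by
  rw [mem_span_range_iff_exists_vecMul]
  constructor
  · rintro ⟨y, hy⟩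
    obtain ⟨Y, rfl⟩ := vec_bijective.2 y
    rw [vecMul_checkZ, Sum.elim_eq_iff, vec_inj, vec_inj] at hy
    exact ⟨Y, hy⟩
  · rintro ⟨Y, rfl, rfl⟩
    exact ⟨_, vecMul_checkZ Y⟩

end Formulas

lemma cssDistance_le_wt_of_checkZ_mulVec_eq_zero {v} (hv : checkZ HZ t *ᵥ v = 0)
    (hv' : v ∉ Submodule.span (ZMod 2) (Set.range (checkX HX HZ t))) :
    cssDistance HZ HX ≤ wt v := by
  obtain ⟨W, B, rfl⟩ := exists_eq_sumElim_vec v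
  rw [checkZ_mulVec, vec_eq_zero_iff, add_eq_zero_iff_eq_neg, ZModModule.neg_eq_self] at hv
  rw [mem_span_checkX_iff] at hv'
  have hker : HZ *ᵥ (W *ᵥ 1) = 0 := by
    rw [mulVec_mulVec, hv, ← mulVec_mulVec, pathIncidence_transpose_mulVec_one, mulVec_zero]
  have hlog : W *ᵥ 1 ∉ Submodule.span (ZMod 2) (Set.range HX) := by
    rw [mem_span_range_iff_exists_vecMul]
    rintro ⟨y, hy⟩
    -- the prefix sums of the layers of `W` reach `W`, up to its total `W *ᵥ 1` on the last layer
    refine hv' ⟨W * pathPrefix t, vecMulVec y (Pi.single (Fin.last t) 1), ?_, ?_⟩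
    · rw [mul_pathPrefix_mul_pathIncidence_transpose, mul_vecMulVec, mulVec_transpose, hy,
        add_assoc, ZModModule.add_self, add_zero]
    · rw [← Matrix.mul_assoc, hv, Matrix.mul_assoc, pathIncidence_transpose_mul_pathPrefix,
        Matrix.mul_one]
  calc cssDistance HZ HX ≤ wt (W *ᵥ 1) := cssDistance_le_wt hker hlog
    _ ≤ wt W.vec := wt_mulVec_one_le W
    _ ≤ wt (Sum.elim W.vec B.vec) := wt_sumElim W.vec B.vec ▸ Nat.le_add_right _ _

omit [Fintype κX] in
lemma mul_cssDistance_le_wt_of_checkX_mulVec_eq_zero {v} (hv : checkX HX HZ t *ᵥ v = 0)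
    (hv' : v ∉ Submodule.span (ZMod 2) (Set.range (checkZ HZ t))) :
    (t + 1) * cssDistance HX HZ ≤ wt v := by
  obtain ⟨W, B, rfl⟩ := exists_eq_sumElim_vec v
  rw [checkX_mulVec, ← Sum.elim_zero_zero, Sum.elim_eq_iff, vec_eq_zero_iff, vec_eq_zero_iff,
    add_eq_zero_iff_eq_neg, ZModModule.neg_eq_self] at hv
  obtain ⟨hWB, hXW⟩ := hv
  rw [mem_span_checkZ_iff] at hv'
  have hker (σ) : HX *ᵥ W.col σ = 0 := by
    rw [← mulVec_single_one, mulVec_mulVec, hXW, zero_mulVec]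
  -- consecutive layers differ by `HZᵀ *ᵥ _`, since `W * pathIncidence t = HZᵀ * B`
  have hcol (σ) : W.col σ + W.col (Fin.last t) ∈ Submodule.span (ZMod 2) (Set.range HZ) := by
    have h := mul_pathIncidence_mul_pathPrefix_transpose W
    rw [hWB, Matrix.mul_assoc] at h
    refine (mem_span_range_iff_exists_vecMul _ _).2 ⟨(B * (pathPrefix t)ᵀ)ᵀ σ, funext fun i => ?_⟩
    simpa [vecMul, dotProduct, mul_apply, mul_comm] using congrFun (congrFun h i) σ
  have hlog (σ) : W.col σ ∉ Submodule.span (ZMod 2) (Set.range HZ) := by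
    intro hσ
    obtain ⟨y, hy⟩ := (mem_span_range_iff_exists_vecMul _ _).1
      ((Submodule.add_mem_iff_right _ hσ).1 (hcol σ))
    refine hv' ⟨vecMulVec y 1 + B * (pathPrefix t)ᵀ, ?_, ?_⟩
    · rw [Matrix.mul_add, mul_vecMulVec, mulVec_transpose, hy, ← Matrix.mul_assoc, ← hWB,
        mul_pathIncidence_mul_pathPrefix_transpose, add_left_comm, ZModModule.add_self, add_zero]
    · rw [Matrix.add_mul, vecMulVec_one_mul_pathIncidence, zero_add, Matrix.mul_assoc,
        pathPrefix_transpose_mul_pathIncidence, Matrix.mul_one]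
  calc (t + 1) * cssDistance HX HZ = ∑ _σ : Fin (t + 1), cssDistance HX HZ := by simp
    _ ≤ ∑ σ, wt (W.col σ) := Finset.sum_le_sum fun σ _ => cssDistance_le_wt (hker σ) (hlog σ)
    _ = wt W.vec := (wt_vec W).symm
    _ ≤ wt (Sum.elim W.vec B.vec) := wt_sumElim W.vec B.vec ▸ Nat.le_add_right _ _

omit [Fintype ι] [DecidableEq ι] in
lemma ker_checkZ_transpose :
    LinearMap.ker (checkZ HZ t)ᵀ.mulVecLin =
      (LinearMap.ker HZᵀ.mulVecLin).map (LinearMap.funLeft (ZMod 2) (ZMod 2) Prod.snd) := by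
  ext v
  obtain ⟨Y, rfl⟩ := vec_bijective.2 v
  simp only [LinearMap.mem_ker, mulVecLin_apply, vecMul_checkZ, mulVec_transpose,
    ← Sum.elim_zero_zero, Sum.elim_eq_iff, vec_eq_zero_iff, Submodule.mem_map,
    ← vec_vecMulVec_one, vec_inj]
  constructor
  · rintro ⟨hZ, hδ⟩
    have hY := mul_pathIncidence_mul_pathPrefix_transpose Y
    rw [hδ, Matrix.zero_mul, eq_comm, add_eq_zero_iff_eq_neg, ZModModule.neg_eq_self] at hY
    refine ⟨Y.col (Fin.last t), ?_, hY.symm⟩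
    rw [← mulVec_transpose, ← mulVec_single_one, mulVec_mulVec, hZ, zero_mulVec]
  · rintro ⟨y, hy, rfl⟩
    rw [mul_vecMulVec, mulVec_transpose, hy, vecMulVec_one_mul_pathIncidence]
    exact ⟨by ext; simp [vecMulVec_apply], rfl⟩

omit [Fintype ι] [DecidableEq ι] in
lemma finrank_ker_checkZ_transpose :
    finrank (ZMod 2) (LinearMap.ker (checkZ HZ t)ᵀ.mulVecLin) =
      finrank (ZMod 2) (LinearMap.ker HZᵀ.mulVecLin) := by
  rw [ker_checkZ_transpose]
  exact (Submodule.equivMapOfInjective _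
    (LinearMap.funLeft_injective_of_surjective _ _ _ Prod.snd_surjective) _).finrank_eq.symm

variable (HZ t) in
def kerCheckXParam :
    (ι → ZMod 2) × Matrix κZ (Fin t) (ZMod 2) →ₗ[ZMod 2]
      ((Fin (t + 1) × ι) ⊕ (Fin t × κZ) → ZMod 2) where
  toFun p := Sum.elim (vecMulVec p.1 1 + HZᵀ * p.2 * (pathPrefix t)ᵀ).vec p.2.vec
  map_add' p q := by
    ext (_ | _) <;> simp [Matrix.mul_add, Matrix.add_mul, add_add_add_comm]
  map_smul' c p := by
    ext (_ | _) <;> simp [Matrix.mul_smul, Matrix.smul_mul, mul_add]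

omit [Fintype ι] [DecidableEq ι] [DecidableEq κZ] in
lemma kerCheckXParam_injective : Function.Injective (kerCheckXParam (ι := ι) HZ t) := by
  rw [← LinearMap.ker_eq_bot, LinearMap.ker_eq_bot']
  rintro ⟨w, B⟩ h
  simp only [kerCheckXParam, LinearMap.coe_mk, AddHom.coe_mk, ← Sum.elim_zero_zero,
    Sum.elim_eq_iff, vec_eq_zero_iff] at h
  obtain ⟨hW, rfl⟩ := h
  simp only [Matrix.mul_zero, Matrix.zero_mul, add_zero] at hW
  refine Prod.ext (funext fun i => ?_) rfl
  simpa [vecMulVec_apply] using congrFun (congrFun hW i) 0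

omit [Fintype κX] [DecidableEq κZ] in
lemma ker_checkX (h : HX * HZᵀ = 0) :
    LinearMap.ker (checkX HX HZ t).mulVecLin =
      LinearMap.range ((kerCheckXParam HZ t).comp
        ((LinearMap.ker HX.mulVecLin).subtype.prodMap LinearMap.id)) := by
  ext v
  obtain ⟨W, B, rfl⟩ := exists_eq_sumElim_vec v
  simp only [LinearMap.mem_ker, mulVecLin_apply, checkX_mulVec, ← Sum.elim_zero_zero,
    Sum.elim_eq_iff, vec_eq_zero_iff, LinearMap.mem_range, LinearMap.coe_comp,
    Function.comp_apply, LinearMap.prodMap_apply, Submodule.coe_subtype, LinearMap.id_coe, id_eq,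
    kerCheckXParam, LinearMap.coe_mk, AddHom.coe_mk, vec_inj, Prod.exists, Subtype.exists,
    exists_prop]
  constructor
  · rintro ⟨hWB, hXW⟩
    rw [add_eq_zero_iff_eq_neg, ZModModule.neg_eq_self] at hWB
    refine ⟨W.col (Fin.last t), ?_, B, ?_, rfl⟩
    · rw [← mulVec_single_one, mulVec_mulVec, hXW, zero_mulVec]
    · rw [← hWB, mul_pathIncidence_mul_pathPrefix_transpose, add_comm W, ← add_assoc,
        ZModModule.add_self, zero_add]
  · rintro ⟨w, hw, B, rfl, rfl⟩
    refine ⟨?_, ?_⟩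
    · rw [Matrix.add_mul, vecMulVec_one_mul_pathIncidence, zero_add, Matrix.mul_assoc,
        pathPrefix_transpose_mul_pathIncidence, Matrix.mul_one, ZModModule.add_self]
    · rw [Matrix.mul_add, mul_vecMulVec, hw, ← Matrix.mul_assoc, ← Matrix.mul_assoc, h]
      simp

omit [Fintype κX] [DecidableEq κZ] in
lemma finrank_ker_checkX (h : HX * HZᵀ = 0) :
    finrank (ZMod 2) (LinearMap.ker (checkX HX HZ t).mulVecLin) =
      finrank (ZMod 2) (LinearMap.ker HX.mulVecLin) + t * Fintype.card κZ := by
  rw [ker_checkX h, LinearMap.finrank_range_of_inj]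
  · simp [Module.finrank_matrix, mul_comm]
  · rw [LinearMap.coe_comp]
    exact kerCheckXParam_injective.comp (Subtype.val_injective.prodMap Function.injective_id)

omit [Fintype κX] in
lemma card_sub_rank_checkX_sub_rank_checkZ (h : HX * HZᵀ = 0) :
    Fintype.card ((Fin (t + 1) × ι) ⊕ (Fin t × κZ)) - (checkX HX HZ t).rank -
      (checkZ HZ t).rank = Fintype.card ι - HX.rank - HZ.rank := by
  have e1 := (checkX HX HZ t).rank_add_finrank_ker
  have e2 := (checkZ HZ t)ᵀ.rank_add_finrank_ker
  have e3 := HX.rank_add_finrank_ker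
  have e4 := HZᵀ.rank_add_finrank_ker
  rw [finrank_ker_checkX h] at e1
  rw [finrank_ker_checkZ_transpose, rank_transpose] at e2
  rw [rank_transpose] at e4
  simp only [Fintype.card_sum, Fintype.card_prod, Fintype.card_fin, add_mul, one_mul] at e1 e2 ⊢
  omega

omit [DecidableEq κZ] in
lemma maxRowWt_checkX_le :
    (checkX HX HZ t).maxRowWt ≤ max (2 + HZᵀ.maxRowWt) HX.maxRowWt := by
  refine (maxRowWt_fromBlocks_le _ _ _ _).trans (max_le_max ?_ ?_)
  · exact add_le_add ((maxRowWt_kronecker_one_le _).trans maxRowWt_pathIncidence_transpose_le)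
      (maxRowWt_one_kronecker_le _)
  · rw [maxRowWt_zero, add_zero]
    exact maxRowWt_one_kronecker_le _

omit [DecidableEq κZ] in
lemma maxRowWt_checkX_transpose_le :
    (checkX HX HZ t)ᵀ.maxRowWt ≤ max (2 + HXᵀ.maxRowWt) HZ.maxRowWt := by
  simp only [checkX, fromBlocks_transpose, ← kroneckerMap_transpose, transpose_transpose,
    transpose_one, transpose_zero]
  refine (maxRowWt_fromBlocks_le _ _ _ _).trans (max_le_max ?_ ?_)
  · exact add_le_add ((maxRowWt_kronecker_one_le _).trans maxRowWt_pathIncidence_le)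
      (maxRowWt_one_kronecker_le _)
  · rw [maxRowWt_zero, add_zero]
    exact maxRowWt_one_kronecker_le _

omit [DecidableEq ι] in
lemma maxRowWt_checkZ_le : (checkZ HZ t).maxRowWt ≤ HZ.maxRowWt + 2 :=
  (maxRowWt_fromCols_le _ _).trans <| add_le_add (maxRowWt_one_kronecker_le _)
    ((maxRowWt_kronecker_one_le _).trans maxRowWt_pathIncidence_le)

omit [DecidableEq ι] in
lemma maxRowWt_checkZ_transpose_le : (checkZ HZ t)ᵀ.maxRowWt ≤ max HZᵀ.maxRowWt 2 := by
  simp only [checkZ, transpose_fromCols, ← kroneckerMap_transpose, transpose_one]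
  exact (maxRowWt_fromRows_le _ _).trans <| max_le_max (maxRowWt_one_kronecker_le _)
    ((maxRowWt_kronecker_one_le _).trans maxRowWt_pathIncidence_transpose_le)

end DistanceBalancing

namespace CSSCode

open DistanceBalancing

section OfMatrices

variable {ι κX κZ : Type*} [Fintype ι] [Fintype κX] [Fintype κZ]
  (HX : Matrix κX ι (ZMod 2)) (HZ : Matrix κZ ι (ZMod 2)) (h : HX * HZᵀ = 0)

noncomputable def ofMatrices : CSSCode where
  N := Fintype.card ι
  nX := Fintype.card κX
  nZ := Fintype.card κZ
  HX := reindex (Fintype.equivFin κX) (Fintype.equivFin ι) HX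
  HZ := reindex (Fintype.equivFin κZ) (Fintype.equivFin ι) HZ
  orth := by
    rw [transpose_reindex, reindex_apply, reindex_apply, submatrix_mul_equiv, h, submatrix_zero]
    rfl

lemma ofMatrices_N : (ofMatrices HX HZ h).N = Fintype.card ι := rfl

lemma ofMatrices_K : (ofMatrices HX HZ h).K = Fintype.card ι - HX.rank - HZ.rank := by
  rw [K, ofMatrices, rank_reindex, rank_reindex]

lemma ofMatrices_wX : (ofMatrices HX HZ h).wX = HX.maxRowWt := maxRowWt_reindex _ _ _

lemma ofMatrices_wZ : (ofMatrices HX HZ h).wZ = HZ.maxRowWt := maxRowWt_reindex _ _ _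

lemma ofMatrices_qX : (ofMatrices HX HZ h).qX = HXᵀ.maxRowWt := by
  rw [← maxRowWt_reindex HXᵀ (Fintype.equivFin ι) (Fintype.equivFin κX), ← transpose_reindex]
  rfl

lemma ofMatrices_qZ : (ofMatrices HX HZ h).qZ = HZᵀ.maxRowWt := by
  rw [← maxRowWt_reindex HZᵀ (Fintype.equivFin ι) (Fintype.equivFin κZ), ← transpose_reindex]
  rfl

lemma ofMatrices_dX : (ofMatrices HX HZ h).dX = cssDistance HZ HX := cssDistance_reindex _ _ _

lemma ofMatrices_dZ : (ofMatrices HX HZ h).dZ = cssDistance HX HZ := cssDistance_reindex _ _ _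

end OfMatrices

def maxWt (C : CSSCode) : ℕ := max (max C.wX C.wZ) (max C.qX C.qZ)

def swap (C : CSSCode) : CSSCode where
  N := C.N
  nX := C.nZ
  nZ := C.nX
  HX := C.HZ
  HZ := C.HX
  orth := by simpa using congrArg transpose C.orth

lemma swap_K (C : CSSCode) : C.swap.K = C.K := Nat.sub_right_comm _ _ _

variable (C : CSSCode) (t : ℕ)

lemma rank_add_rank_lt (hK : 1 ≤ C.K) : C.HX.rank + C.HZ.rank < C.N := by
  unfold K at hK
  omega

noncomputable def balance : CSSCode :=
  ofMatrices (checkX C.HX C.HZ t) (checkZ C.HZ t) (checkX_mul_checkZ_transpose C.orth)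

lemma balance_N : (C.balance t).N = (t + 1) * C.N + t * C.nZ := by
  simp [balance, ofMatrices_N]

lemma balance_K : (C.balance t).K = C.K := by
  rw [balance, ofMatrices_K, card_sub_rank_checkX_sub_rank_checkZ C.orth, Fintype.card_fin]
  rfl

lemma maxWt_balance_le : (C.balance t).maxWt ≤ C.maxWt + 2 := by
  have hwX := maxRowWt_checkX_le (HX := C.HX) (HZ := C.HZ) (t := t)
  have hwZ := maxRowWt_checkZ_le (HZ := C.HZ) (t := t)
  have hqX := maxRowWt_checkX_transpose_le (HX := C.HX) (HZ := C.HZ) (t := t)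
  have hqZ := maxRowWt_checkZ_transpose_le (HZ := C.HZ) (t := t)
  simp only [maxWt, balance, ofMatrices_wX, ofMatrices_wZ, ofMatrices_qX, ofMatrices_qZ]
  change _ ≤ max (max C.HX.maxRowWt C.HZ.maxRowWt) (max C.HXᵀ.maxRowWt C.HZᵀ.maxRowWt) + 2
  omega

lemma rank_checkZ_add_rank_checkX_lt (hK : 1 ≤ C.K) :
    (checkZ C.HZ t).rank + (checkX C.HX C.HZ t).rank <
      Fintype.card ((Fin (t + 1) × Fin C.N) ⊕ (Fin t × Fin C.nZ)) := by
  have := card_sub_rank_checkX_sub_rank_checkZ (t := t) C.orth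
  rw [Fintype.card_fin] at this
  unfold K at hK
  omega

lemma dX_le_dX_balance (hK : 1 ≤ C.K) : C.dX ≤ (C.balance t).dX := by
  rw [balance, ofMatrices_dX]
  exact le_cssDistance (C.rank_checkZ_add_rank_checkX_lt t hK) fun v hv hv' =>
    cssDistance_le_wt_of_checkZ_mulVec_eq_zero hv hv'

lemma mul_dZ_le_dZ_balance (hK : 1 ≤ C.K) : (t + 1) * C.dZ ≤ (C.balance t).dZ := by
  rw [balance, ofMatrices_dZ]
  exact le_cssDistance ((add_comm _ _).trans_lt (C.rank_checkZ_add_rank_checkX_lt t hK))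
    fun v hv hv' => mul_cssDistance_le_wt_of_checkX_mulVec_eq_zero hv hv'

variable {C}

lemma one_le_dZ (hK : 1 ≤ C.K) : 1 ≤ C.dZ := by
  refine one_le_cssDistance ?_
  rw [Fintype.card_fin]
  exact C.rank_add_rank_lt hK

lemma dX_le_N (hK : 1 ≤ C.K) : C.dX ≤ C.N := by
  refine (cssDistance_le_card ?_).trans_eq (Fintype.card_fin _)
  rw [Fintype.card_fin, add_comm]
  exact C.rank_add_rank_lt hK

theorem exists_balanced (hK : 1 ≤ C.K) (hle : C.dZ ≤ C.dX) :
    ∃ C' : CSSCode, C'.K = C.K ∧ C'.maxWt ≤ C.maxWt + 2 ∧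
      C'.N * C.dZ ≤ 2 * (C.N + C.nZ) * C.dX ∧ C.dX ≤ min C'.dX C'.dZ := by
  set t := C.dX / C.dZ
  have hlt : C.dX < (t + 1) * C.dZ := by
    rw [add_mul, one_mul]
    exact Nat.lt_div_mul_add (one_le_dZ hK)
  have hle' : (t + 1) * C.dZ ≤ 2 * C.dX := by
    rw [add_mul, one_mul, two_mul]
    exact add_le_add (Nat.div_mul_le_self _ _) hle
  refine ⟨C.balance t, C.balance_K t, C.maxWt_balance_le t, ?_,
    le_min (C.dX_le_dX_balance t hK) (hlt.le.trans (C.mul_dZ_le_dZ_balance t hK))⟩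
  calc (C.balance t).N * C.dZ ≤ (t + 1) * C.dZ * (C.N + C.nZ) := by
        rw [balance_N]
        nlinarith
    _ ≤ 2 * C.dX * (C.N + C.nZ) := Nat.mul_le_mul_right _ hle'
    _ = 2 * (C.N + C.nZ) * C.dX := by ring

end CSSCode

lemma mul_mul_le_mul_rpow {a μ n dX dZ : ℝ} (hμ : 1 ≤ μ) (hdZ : 0 ≤ dZ) (hdX : 0 < dX)
    (hdXn : dX ≤ n) (hd : a * n ^ μ ≤ dX * dZ) : a * n * dX ≤ dZ * dX ^ (3 - μ) := by
  have hn : 0 < n := hdX.trans_le hdXn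
  have hpow : n ^ (1 - μ) ≤ dX ^ (1 - μ) := Real.rpow_le_rpow_of_nonpos hdX hdXn (by linarith)
  calc a * n * dX = a * n ^ μ * n ^ (1 - μ) * dX := by
        rw [mul_assoc a (n ^ μ), ← Real.rpow_add hn, add_sub_cancel, Real.rpow_one]
    _ ≤ dX * dZ * dX ^ (1 - μ) * dX := by gcongr
    _ = dZ * dX ^ (3 - μ) := by
        rw [show 3 - μ = 1 - μ + 1 + 1 by ring, Real.rpow_add hdX, Real.rpow_add hdX, Real.rpow_one]
        ring

lemma rpow_mul_rpow_le_of_mul_le {a c μ n nZ n' dX dZ : ℝ} (ha : 0 < a) (hc : 0 ≤ c)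
    (hμ1 : 1 ≤ μ) (hμ3 : μ < 3) (hdZ : 0 < dZ) (hdX : 0 < dX) (hdXn : dX ≤ n) (hnZ : nZ ≤ c * n)
    (hd : a * n ^ μ ≤ dX * dZ) (hn' : n' * dZ ≤ 2 * (n + nZ) * dX) (hn'0 : 0 ≤ n') :
    (a / (2 * (1 + c))) ^ (1 / (3 - μ)) * n' ^ (1 / (3 - μ)) ≤ dX := by
  have hlin : a / (2 * (1 + c)) * n' ≤ dX ^ (3 - μ) := by
    rw [div_mul_eq_mul_div, div_le_iff₀ (by positivity)]
    refine le_of_mul_le_mul_right ?_ hdZ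
    calc a * n' * dZ = a * (n' * dZ) := by ring
      _ ≤ a * (2 * ((1 + c) * n) * dX) :=
          mul_le_mul_of_nonneg_left (hn'.trans (by gcongr; linarith)) ha.le
      _ = 2 * (1 + c) * (a * n * dX) := by ring
      _ ≤ 2 * (1 + c) * (dZ * dX ^ (3 - μ)) :=
          mul_le_mul_of_nonneg_left (mul_mul_le_mul_rpow hμ1 hdZ.le hdX hdXn hd) (by positivity)
      _ = dX ^ (3 - μ) * (2 * (1 + c)) * dZ := by ring
  calc (a / (2 * (1 + c))) ^ (1 / (3 - μ)) * n' ^ (1 / (3 - μ))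
      = (a / (2 * (1 + c)) * n') ^ (1 / (3 - μ)) := (Real.mul_rpow (by positivity) hn'0).symm
    _ ≤ (dX ^ (3 - μ)) ^ (1 / (3 - μ)) := by gcongr
    _ = dX := by rw [one_div, Real.rpow_rpow_inv hdX.le (by linarith)]

/-- For all reals `c ≥ 2`, `a > 0` and `1 ≤ μ ≤ 2` there is a constant
`a′ > 0` such that: every CSS code `C` with `K ≥ 1`, `w_X, w_Z, q_X, q_Z ≤ c`,
`n_X ≤ c·N`, `n_Z ≤ c·N` and `d_X·d_Z ≥ a·N^μ` admits a CSS code `C̃` with `K̃ = K`,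
`w̃_X, w̃_Z, q̃_X, q̃_Z ≤ c+2`, and `min(d̃_X, d̃_Z) ≥ a′·Ñ^{1/(3−μ)}`. -/
theorem stmt14 (c a μ : ℝ) (hc : 2 ≤ c) (ha : 0 < a) (hμ1 : 1 ≤ μ) (hμ2 : μ ≤ 2) :
    ∃ a' : ℝ, 0 < a' ∧
      ∀ C : CSSCode, 1 ≤ C.K →
        (C.wX : ℝ) ≤ c → (C.wZ : ℝ) ≤ c → (C.qX : ℝ) ≤ c → (C.qZ : ℝ) ≤ c →
        (C.nX : ℝ) ≤ c * C.N → (C.nZ : ℝ) ≤ c * C.N →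
        a * (C.N : ℝ) ^ μ ≤ (C.dX : ℝ) * (C.dZ : ℝ) →
        ∃ C' : CSSCode, C'.K = C.K ∧
          (C'.wX : ℝ) ≤ c + 2 ∧ (C'.wZ : ℝ) ≤ c + 2 ∧
          (C'.qX : ℝ) ≤ c + 2 ∧ (C'.qZ : ℝ) ≤ c + 2 ∧
          a' * (C'.N : ℝ) ^ ((1 : ℝ) / (3 - μ)) ≤ ((min C'.dX C'.dZ : ℕ) : ℝ) := by
  refine ⟨(a / (2 * (1 + c))) ^ ((1 : ℝ) / (3 - μ)), by positivity,
    fun C hK hwX hwZ hqX hqZ hnX hnZ hd => ?_⟩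
  wlog hle : C.dZ ≤ C.dX generalizing C
  · obtain ⟨C', hK', h⟩ := this C.swap (C.swap_K ▸ hK) hwZ hwX hqZ hqX hnZ hnX
      (hd.trans_eq (mul_comm _ _)) (le_of_not_ge hle)
    exact ⟨C', hK'.trans C.swap_K, h⟩
  obtain ⟨C', hK', hwt, hN', hdist⟩ := CSSCode.exists_balanced hK hle
  have hwt' : (C'.maxWt : ℝ) ≤ c + 2 := by
    have : (C.maxWt : ℝ) ≤ c := by
      simp only [CSSCode.maxWt, Nat.cast_max, max_le_iff]
      exact ⟨⟨hwX, hwZ⟩, hqX, hqZ⟩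
    exact (Nat.cast_le.2 hwt).trans (by push_cast; linarith)
  simp only [CSSCode.maxWt, Nat.cast_max, max_le_iff] at hwt'
  obtain ⟨⟨hwX', hwZ'⟩, hqX', hqZ'⟩ := hwt'
  refine ⟨C', hK', hwX', hwZ', hqX', hqZ', ?_⟩
  have hdZ : (0 : ℝ) < C.dZ := by exact_mod_cast CSSCode.one_le_dZ hK
  refine (rpow_mul_rpow_le_of_mul_le ha (by linarith) hμ1 (by linarith) hdZ
    (hdZ.trans_le (by exact_mod_cast hle)) (by exact_mod_cast CSSCode.dX_le_N hK) hnZ hd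
    (by exact_mod_cast hN') (Nat.cast_nonneg _)).trans ?_
  exact_mod_cast hdist
end

section
/- Let C̃ be obtained from a CSS code C by the full X-type generator splitting procedure, and let ε > 0. If C is ε-X-sound, then C̃ is ε-X-sound. -/
open Matrix

/-- Maximum weight of a row of a matrix over `F₂`. -/
def maxRowW {m α : Type*} [Fintype m] [Fintype α] (M : Matrix m α (ZMod 2)) : ℕ :=
  Finset.univ.sup fun i => wt (M i)

/-- Maximum weight of a column of a matrix over `F₂`. -/
def maxColW {m α : Type*} [Fintype m] [Fintype α] (M : Matrix m α (ZMod 2)) : ℕ :=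
  Finset.univ.sup fun j => wt fun i => M i j

/-- Total number of nonzero entries of a matrix over `F₂`. -/
def totW {m α : Type*} [Fintype m] [Fintype α] (M : Matrix m α (ZMod 2)) : ℕ :=
  ∑ i, wt (M i)

variable {N nX nZ : ℕ}

/-- Qubits of the code obtained by the full X-type generator splitting procedure:
the original `N` qubits, plus, for each row of `HX` of weight `w ≥ 4` (a "heavy" row),
cut qubits `(1),…,(w−3)` (0-indexed below). -/
abbrev SplitQ (HX : Matrix (Fin nX) (Fin N) (ZMod 2)) : Type :=
  Fin N ⊕ Σ i : {i : Fin nX // 4 ≤ wt (HX i)}, Fin (wt (HX i.1) - 3)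

/-- X-type generators of the fully split code: the rows of `HX` of weight `≤ 3`,
plus, for each heavy row, the `w−2` rows created by splitting it. -/
abbrev SplitXIdx (HX : Matrix (Fin nX) (Fin N) (ZMod 2)) : Type :=
  {i : Fin nX // ¬ 4 ≤ wt (HX i)} ⊕ Σ i : {i : Fin nX // 4 ≤ wt (HX i)}, Fin (wt (HX i.1) - 2)

/-- X-type generator matrix of the code `C̃` obtained from `C` by applying the X-type
generator splitting step once to each row of `HX` of weight at least 4 (the result is the
same in any order).  Here `q i` enumerates, in a fixed order, the support of the heavy
row `i`.  Splitting a heavy row with support `{q₁,…,q_w}` produces `w−2` rows with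
supports `{q₁,q₂,(1)}`, `{(m),q_{m+2},(m+1)}` for `m = 1,…,w−4`, and `{(w−3),q_{w−1},q_w}`,
on the original qubits together with that row's own cut qubits. -/
def splitHX (HX : Matrix (Fin nX) (Fin N) (ZMod 2))
    (q : ∀ i : {i : Fin nX // 4 ≤ wt (HX i)}, Fin (wt (HX i.1)) → Fin N) :
    Matrix (SplitXIdx HX) (SplitQ HX) (ZMod 2) := fun r j =>
  match r, j with
  | Sum.inl i, Sum.inl p => HX i.1 p
  | Sum.inl _, Sum.inr _ => 0
  | Sum.inr ⟨i, r⟩, Sum.inl p =>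
      have hw : 4 ≤ wt (HX i.1) := i.2
      if (r.val = 0 ∧ (p = q i ⟨0, by omega⟩ ∨ p = q i ⟨1, by omega⟩)) ∨
         (1 ≤ r.val ∧ r.val ≤ wt (HX i.1) - 4 ∧
           p = q i ⟨r.val + 1, by have := r.isLt; omega⟩) ∨
         (r.val = wt (HX i.1) - 3 ∧
           (p = q i ⟨wt (HX i.1) - 2, by omega⟩ ∨ p = q i ⟨wt (HX i.1) - 1, by omega⟩))
      then 1 else 0
  | Sum.inr ⟨i, r⟩, Sum.inr ⟨i', c⟩ =>
      if i' = i ∧ (c.val = r.val ∨ c.val + 1 = r.val) then 1 else 0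

/-- Z-type generator matrix of the code `C̃` obtained from `C` by the full X-type generator
splitting procedure: each row `R` of `HZ` agrees with `R` on the original qubits, and its
entry at the cut qubit `(m)` of heavy row `i` is the parity of
`|supp(R) ∩ {q_{i,1},…,q_{i,m+1}}|`. -/
def splitHZ (HX : Matrix (Fin nX) (Fin N) (ZMod 2)) (HZ : Matrix (Fin nZ) (Fin N) (ZMod 2))
    (q : ∀ i : {i : Fin nX // 4 ≤ wt (HX i)}, Fin (wt (HX i.1)) → Fin N) :
    Matrix (Fin nZ) (SplitQ HX) (ZMod 2) := fun R j =>
  match j with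
  | Sum.inl p => HZ R p
  | Sum.inr ⟨i, m⟩ => ∑ a : Fin (wt (HX i.1)), if a.val ≤ m.val + 1 then HZ R (q i a) else 0

/-- A CSS code (given by its Z-type generator matrix `HZ`) is `ε`-X-sound if for every
`v` with `H_Z·v ≠ 0` there exists `u ∈ ker(H_Z)` with `wt(H_Z·v) ≥ ε·wt(v+u)`. -/
def XSound {m α : Type*} [Fintype m] [Fintype α] (ε : ℝ) (HZ : Matrix m α (ZMod 2)) : Prop :=
  ∀ v : α → ZMod 2, HZ.mulVec v ≠ 0 →
    ∃ u : α → ZMod 2, HZ.mulVec u = 0 ∧ ε * (wt (v + u) : ℝ) ≤ (wt (HZ.mulVec v) : ℝ)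

/-
Every Z-check entry at a cut qubit is a parity of entries of the same check at original
qubits, so `H̃_Z = [H_Z | H_Z Q]` for a fixed matrix `Q`. Given `v = (v₁, v₂)`, the syndrome
`H̃_Z v` equals `H_Z v'` with `v' = v₁ + Q v₂`; soundness of `C` yields `u'` with
`H_Z u' = 0` and `ε·wt(v' + u') ≤ wt(H_Z v')`, and `u = -v + (v' + u', 0)` lies in
`ker H̃_Z` with `v + u = (v' + u', 0)` of the same weight.
-/

theorem wt_sumElim_zero {α β : Type*} [Fintype α] [Fintype β] (w : α → ZMod 2) :
    wt (Sum.elim w (0 : β → ZMod 2)) = wt w := by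
  simp only [wt, Finset.card_filter, Fintype.sum_sum_type, Sum.elim_inl, Sum.elim_inr,
    Pi.zero_apply, ne_eq, not_true_eq_false, if_false, Finset.sum_const_zero, add_zero]
  rfl

theorem XSound.fromCols_mul {m α β : Type*} [Fintype m] [Fintype α] [Fintype β] {ε : ℝ}
    {HZ : Matrix m α (ZMod 2)} (hsound : XSound ε HZ) (Q : Matrix α β (ZMod 2)) :
    XSound ε (fromCols HZ (HZ * Q)) := by
  intro v hv
  set v' := v ∘ Sum.inl + Q *ᵥ (v ∘ Sum.inr)
  have hsyndrome : fromCols HZ (HZ * Q) *ᵥ v = HZ *ᵥ v' := by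
    rw [fromCols_mulVec, ← mulVec_mulVec, mulVec_add]
  have hembed : ∀ w : α → ZMod 2, fromCols HZ (HZ * Q) *ᵥ Sum.elim w 0 = HZ *ᵥ w := by
    intro w
    rw [fromCols_mulVec_sumElim, mulVec_zero, add_zero]
  obtain ⟨u', hu', hwt⟩ := hsound v' (hsyndrome ▸ hv)
  refine ⟨-v + Sum.elim (v' + u') 0, ?_, ?_⟩
  · rw [mulVec_add, mulVec_neg, hembed, mulVec_add, hu', hsyndrome, add_zero, neg_add_cancel]
  · rwa [add_neg_cancel_left, wt_sumElim_zero, hsyndrome]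

def cutMatrix (HX : Matrix (Fin nX) (Fin N) (ZMod 2))
    (q : ∀ i : {i : Fin nX // 4 ≤ wt (HX i)}, Fin (wt (HX i.1)) → Fin N) :
    Matrix (Fin N) (Σ i : {i : Fin nX // 4 ≤ wt (HX i)}, Fin (wt (HX i.1) - 3)) (ZMod 2) :=
  fun p c => ∑ a : Fin (wt (HX c.1.1)), if a.val ≤ c.2.val + 1 ∧ q c.1 a = p then 1 else 0

theorem splitHZ_eq_fromCols (HX : Matrix (Fin nX) (Fin N) (ZMod 2))
    (HZ : Matrix (Fin nZ) (Fin N) (ZMod 2))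
    (q : ∀ i : {i : Fin nX // 4 ≤ wt (HX i)}, Fin (wt (HX i.1)) → Fin N) :
    splitHZ HX HZ q = fromCols HZ (HZ * cutMatrix HX q) := by
  ext R (p | ⟨i, m⟩)
  · rfl
  · simp only [splitHZ, fromCols_apply_inr, mul_apply, cutMatrix, Finset.mul_sum]
    rw [Finset.sum_comm]
    refine Finset.sum_congr rfl fun a _ => ?_
    split_ifs with h <;> simp [h]

theorem stmt16_general (HX : Matrix (Fin nX) (Fin N) (ZMod 2)) (HZ : Matrix (Fin nZ) (Fin N) (ZMod 2))
    (q : ∀ i : {i : Fin nX // 4 ≤ wt (HX i)}, Fin (wt (HX i.1)) → Fin N)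
    (ε : ℝ) (hsound : XSound ε HZ) :
    XSound ε (splitHZ HX HZ q) := by
  rw [splitHZ_eq_fromCols]
  exact hsound.fromCols_mul _

/-- If `C` is `ε`-X-sound, then the code `C̃` obtained from `C` by the
full X-type generator splitting procedure is `ε`-X-sound. -/
theorem stmt16 (HX : Matrix (Fin nX) (Fin N) (ZMod 2)) (HZ : Matrix (Fin nZ) (Fin N) (ZMod 2))
    (hCSS : HX * HZ.transpose = 0)
    (q : ∀ i : {i : Fin nX // 4 ≤ wt (HX i)}, Fin (wt (HX i.1)) → Fin N)
    (hinj : ∀ i, Function.Injective (q i))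
    (hrange : ∀ i p, HX i.1 p ≠ 0 ↔ p ∈ Set.range (q i))
    (ε : ℝ) (hε : 0 < ε) (hsound : XSound ε HZ) :
    XSound ε (splitHZ HX HZ q) :=
  stmt16_general HX HZ q ε hsound
end

section
/- Let C̃ be obtained from a CSS code C by the full X-type generator splitting procedure (so that ñ_Z = n_Z, with the rows of H̃_Z in bijection with the rows of H_Z), and let ε > 0. If C is ε-Z-cosound, then C̃ is ε-Z-cosound. -/
open Matrix

variable {N nX nZ : ℕ}

/-- A CSS code (given by its Z-type generator matrix `HZ`) is `ε`-Z-cosound if for every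
`a` with `aᵀ·H_Z ≠ 0` there exists `b` with `bᵀ·H_Z = 0` and
`wt(aᵀ·H_Z) ≥ ε·wt(a+b)`. -/
def ZCosound {m α : Type*} [Fintype m] [Fintype α] (ε : ℝ) (HZ : Matrix m α (ZMod 2)) : Prop :=
  ∀ a : m → ZMod 2, Matrix.vecMul a HZ ≠ 0 →
    ∃ b : m → ZMod 2, Matrix.vecMul b HZ = 0 ∧
      ε * (wt (a + b) : ℝ) ≤ (wt (Matrix.vecMul a HZ) : ℝ)

/-! The syndrome `aᵀ·H̃_Z` of the split code agrees with `aᵀ·H_Z` on the original qubits, and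
its entry at a cut qubit is a partial sum of entries of `aᵀ·H_Z`. Hence `aᵀ·H̃_Z` vanishes
whenever `aᵀ·H_Z` does, and `wt(aᵀ·H̃_Z) ≥ wt(aᵀ·H_Z)`; so the witness `b` for `C` also serves
for `C̃`. -/

lemma wt_comp_le_of_injective {α β : Type*} [Fintype α] [Fintype β] (v : β → ZMod 2)
    {f : α → β} (hf : Function.Injective f) : wt (v ∘ f) ≤ wt v :=
  Finset.card_le_card_of_injOn f (fun _ hx => by simpa using hx) hf.injOn

lemma ZCosound.of_wt_le {m α β : Type*} [Fintype m] [Fintype α] [Fintype β] {ε : ℝ}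
    {H : Matrix m α (ZMod 2)} {H' : Matrix m β (ZMod 2)}
    (hker : ∀ b, vecMul b H = 0 → vecMul b H' = 0)
    (hwt : ∀ a, wt (vecMul a H) ≤ wt (vecMul a H')) (h : ZCosound ε H) :
    ZCosound ε H' := by
  intro a ha
  obtain ⟨b, hb, hab⟩ := h a (mt (hker a) ha)
  exact ⟨b, hker b hb, hab.trans (by exact_mod_cast hwt a)⟩

section Splitting

variable (HX : Matrix (Fin nX) (Fin N) (ZMod 2)) (HZ : Matrix (Fin nZ) (Fin N) (ZMod 2))
  (q : ∀ i : {i : Fin nX // 4 ≤ wt (HX i)}, Fin (wt (HX i.1)) → Fin N) (v : Fin nZ → ZMod 2)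

lemma vecMul_splitHZ_comp_inl : vecMul v (splitHZ HX HZ q) ∘ Sum.inl = vecMul v HZ := by
  ext p
  simp [vecMul, dotProduct, splitHZ]

lemma vecMul_splitHZ_inr (i : {i : Fin nX // 4 ≤ wt (HX i)}) (m : Fin (wt (HX i.1) - 3)) :
    vecMul v (splitHZ HX HZ q) (Sum.inr ⟨i, m⟩) =
      ∑ a : Fin (wt (HX i.1)), if a.val ≤ m.val + 1 then vecMul v HZ (q i a) else 0 := by
  simp only [vecMul, dotProduct, splitHZ, Finset.mul_sum]
  rw [Finset.sum_comm]
  refine Finset.sum_congr rfl fun a _ => ?_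
  split_ifs <;> simp

lemma vecMul_splitHZ_eq_zero (hv : vecMul v HZ = 0) : vecMul v (splitHZ HX HZ q) = 0 := by
  ext (p | ⟨i, m⟩)
  · exact (congrFun (vecMul_splitHZ_comp_inl HX HZ q v) p).trans (congrFun hv p)
  · simp [vecMul_splitHZ_inr, hv]

lemma wt_vecMul_le_wt_vecMul_splitHZ : wt (vecMul v HZ) ≤ wt (vecMul v (splitHZ HX HZ q)) := by
  rw [← vecMul_splitHZ_comp_inl HX HZ q v]
  exact wt_comp_le_of_injective _ Sum.inl_injective

end Splitting

theorem stmt18_general (HX : Matrix (Fin nX) (Fin N) (ZMod 2)) (HZ : Matrix (Fin nZ) (Fin N) (ZMod 2))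
    (q : ∀ i : {i : Fin nX // 4 ≤ wt (HX i)}, Fin (wt (HX i.1)) → Fin N)
    (ε : ℝ) (hcosound : ZCosound ε HZ) :
    ZCosound ε (splitHZ HX HZ q) :=
  hcosound.of_wt_le (vecMul_splitHZ_eq_zero HX HZ q) (wt_vecMul_le_wt_vecMul_splitHZ HX HZ q)

/-- If `C` is `ε`-Z-cosound, then the code `C̃` obtained from `C` by the
full X-type generator splitting procedure (whose Z-type generators are in bijection with
those of `C`) is `ε`-Z-cosound. -/
theorem stmt18 (HX : Matrix (Fin nX) (Fin N) (ZMod 2)) (HZ : Matrix (Fin nZ) (Fin N) (ZMod 2))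
    (hCSS : HX * HZ.transpose = 0)
    (q : ∀ i : {i : Fin nX // 4 ≤ wt (HX i)}, Fin (wt (HX i.1)) → Fin N)
    (hinj : ∀ i, Function.Injective (q i))
    (hrange : ∀ i p, HX i.1 p ≠ 0 ↔ p ∈ Set.range (q i))
    (ε : ℝ) (hε : 0 < ε) (hcosound : ZCosound ε HZ) :
    ZCosound ε (splitHZ HX HZ q) :=
  stmt18_general HX HZ q ε hcosound
end
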